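/- Let g be a complex simple Lie algebra with root system R, highest root ρ, and Killing form ⟨·,·⟩. If v ∈ ⊕_{⟨α|ρ⟩ = -1} g_α satisfies [v,[v,E_ρ]] = c · H_ρ for some c ∈ ℂ, then c = 0, i.e. [v,[v,E_ρ]] = 0. -/

import Mathlib

/-! Pair both sides with `Hρ`. Invariance of `B` moves `ad v` across:
`B Hρ ⁅v, ⁅v, Eρ⁆⁆ = B ⁅Hρ, v⁆ ⁅v, Eρ⁆`, a multiple of `B v ⁅v, Eρ⁆ = B ⁅v, v⁆ Eρ = 0`,
whereas `B Hρ (c • Hρ) = c * r` with `r ≠ 0`. -/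

section InvariantForm

variable {R L : Type*} [CommRing R] [LieRing L] [LieAlgebra R L] {B : LinearMap.BilinForm R L}

lemma bilinForm_apply_self_lie_eq_zero (hB : ∀ x y z : L, B ⁅x, y⁆ z = B x ⁅y, z⁆) (v x : L) :
    B v ⁅v, x⁆ = 0 := by
  rw [← hB, lie_self, map_zero, LinearMap.zero_apply]

lemma bilinForm_apply_lie_lie_eq_zero_of_lie_eq_smul
    (hB : ∀ x y z : L, B ⁅x, y⁆ z = B x ⁅y, z⁆) {H v : L} {a : R} (hHv : ⁅H, v⁆ = a • v)
    (x : L) : B H ⁅v, ⁅v, x⁆⁆ = 0 := by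
  rw [← hB, hHv, map_smul, LinearMap.smul_apply, bilinForm_apply_self_lie_eq_zero hB, smul_zero]

end InvariantForm

/-- Let `g` be a complex simple Lie algebra with Killing form `B`, highest root `ρ`,
Killing dual `Hρ` of `ρ` (so `B Hρ Hρ = ⟨ρ,ρ⟩ = r ≠ 0`), and `v` in the sum of
root spaces `g_α` with `⟨α|ρ⟩ = -1` (so `⁅Hρ, v⁆ = -(r/2) • v`).
If `⁅v, ⁅v, Eρ⁆⁆ = c • Hρ`, then `c = 0`, i.e. `⁅v, ⁅v, Eρ⁆⁆ = 0`. -/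
theorem stmt_2 {L : Type*} [LieRing L] [LieAlgebra ℂ L]
    (B : LinearMap.BilinForm ℂ L)
    (hinv : ∀ x y z : L, B ⁅x, y⁆ z = B x ⁅y, z⁆)
    (Hρ Eρ v : L) (r : ℂ) (hr : r ≠ 0)
    (hnorm : B Hρ Hρ = r)
    (hHv : ⁅Hρ, v⁆ = -(r / 2) • v)
    (c : ℂ) (hc : ⁅v, ⁅v, Eρ⁆⁆ = c • Hρ) :
    c = 0 ∧ ⁅v, ⁅v, Eρ⁆⁆ = 0 := by
  have hcr : c * r = 0 := by
    have := bilinForm_apply_lie_lie_eq_zero_of_lie_eq_smul hinv hHv Eρ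
    rwa [hc, map_smul, smul_eq_mul, hnorm] at this
  have hc0 : c = 0 := (mul_eq_zero.mp hcr).resolve_right hr
  exact ⟨hc0, by rw [hc, hc0, zero_smul]⟩
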